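/- arXiv:1505.06155 — 2 statements merged into one kernel-verified Lean document; each statement's English description precedes it below -/
import Mathlib

section
/- Let G and H be connected graphs, each with at least two vertices, of order n₁ and n₂ and having t₁ and t₂ true twin equivalence classes respectively. Then dim_l(G ⊠ H) ≥ n₁n₂ − t₁t₂. -/
open SimpleGraph

/-- The strong product of two simple graphs. -/
def strongProd {α β : Type*} (G : SimpleGraph α) (H : SimpleGraph β) :
    SimpleGraph (α × β) where
  Adj x y := (x.1 = y.1 ∧ H.Adj x.2 y.2) ∨ (x.2 = y.2 ∧ G.Adj x.1 y.1) ∨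
      (G.Adj x.1 y.1 ∧ H.Adj x.2 y.2)
  symm := by
    constructor
    rintro x y (⟨h1, h2⟩ | ⟨h1, h2⟩ | ⟨h1, h2⟩)
    · exact Or.inl ⟨h1.symm, h2.symm⟩
    · exact Or.inr (Or.inl ⟨h1.symm, h2.symm⟩)
    · exact Or.inr (Or.inr ⟨h1.symm, h2.symm⟩)
  loopless := by
    constructor
    rintro x (⟨_, h⟩ | ⟨_, h⟩ | ⟨h, _⟩)
    · exact H.irrefl h
    · exact G.irrefl h
    · exact G.irrefl h

/-- A set `S` is a local metric generator for `G` if every pair of adjacent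
vertices is distinguished by some element of `S`. -/
def IsLocalMetricGenerator {α : Type*} (G : SimpleGraph α) (S : Set α) : Prop :=
  ∀ u v : α, G.Adj u v → ∃ s ∈ S, G.dist u s ≠ G.dist v s

/-- The local metric dimension of a graph. -/
noncomputable def localMetricDim {α : Type*} [Fintype α] (G : SimpleGraph α) : ℕ :=
  sInf {n | ∃ S : Finset α, S.card = n ∧ IsLocalMetricGenerator G ↑S}

/-- A set `S` is a metric generator for `G` if every pair of distinct
vertices is distinguished by some element of `S`. -/
def IsMetricGenerator {α : Type*} (G : SimpleGraph α) (S : Set α) : Prop :=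
  ∀ u v : α, u ≠ v → ∃ s ∈ S, G.dist u s ≠ G.dist v s

/-- The metric dimension of a graph. -/
noncomputable def metricDim {α : Type*} [Fintype α] (G : SimpleGraph α) : ℕ :=
  sInf {n | ∃ S : Finset α, S.card = n ∧ IsMetricGenerator G ↑S}

/-- The eccentricity of a vertex: the maximum distance to another vertex. -/
noncomputable def eccentricity {α : Type*} (G : SimpleGraph α) (v : α) : ℕ :=
  sSup {d | ∃ u, G.dist v u = d}

/-- The diameter of a graph: maximum eccentricity. -/
noncomputable def graphDiam {α : Type*} (G : SimpleGraph α) : ℕ :=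
  sSup {d | ∃ v, eccentricity G v = d}

/-- The radius of a graph: minimum eccentricity. -/
noncomputable def graphRadius {α : Type*} (G : SimpleGraph α) : ℕ :=
  sInf {d | ∃ v, eccentricity G v = d}

/-- The interval `I[x,y]`: vertices lying on some shortest `x`–`y` path. -/
def interval {α : Type*} (G : SimpleGraph α) (x y : α) : Set α :=
  {w | G.dist x w + G.dist w y = G.dist x y}

/-- A graph is adjacency `k`-resolved if for every pair of adjacent vertices
`x, y` there is a vertex `w` with `d(y,w) ≥ k` and `x ∈ I[y,w]`, or
`d(x,w) ≥ k` and `y ∈ I[x,w]`. -/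
def AdjKResolved {α : Type*} (G : SimpleGraph α) (k : ℕ) : Prop :=
  ∀ x y : α, G.Adj x y →
    ∃ w : α, (k ≤ G.dist y w ∧ x ∈ interval G y w) ∨
      (k ≤ G.dist x w ∧ y ∈ interval G x w)

/-- The true twin equivalence relation: `u ≈ v` iff `N[u] = N[v]`. -/
def trueTwinSetoid {α : Type*} (G : SimpleGraph α) : Setoid α where
  r u v := insert u (G.neighborSet u) = insert v (G.neighborSet v)
  iseqv := ⟨fun _ => rfl, Eq.symm, Eq.trans⟩

/-!
Two distinct true twins are adjacent and are at the same distance from every other vertex,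
so a local metric generator must contain all but at most one vertex of each true twin class;
hence `dim_l(G) ≥ n - t` for any graph. The closed neighbourhood of `(a, b)` in `G ⊠ H` is
`N[a] ×ˢ N[b]`, so the true twin classes of `G ⊠ H` are the products of those of `G` and `H`,
and there are `t₁ t₂` of them.
-/

namespace SimpleGraph

variable {α β : Type*} {G : SimpleGraph α} {u v w : α}

lemma eq_or_adj_of_insert_neighborSet_subset
    (h : insert u (G.neighborSet u) ⊆ insert v (G.neighborSet v)) : u = v ∨ G.Adj v u :=
  h (Set.mem_insert u _)

lemma dist_le_dist_of_insert_neighborSet_subset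
    (h : insert u (G.neighborSet u) ⊆ insert v (G.neighborSet v)) (hwu : w ≠ u) :
    G.dist v w ≤ G.dist u w := by
  by_cases hr : G.Reachable u w
  · obtain ⟨p, hp⟩ := hr.exists_walk_length_eq_dist
    cases p with
    | nil => exact absurd rfl hwu
    | @cons _ x _ hux q =>
      rw [← hp, Walk.length_cons]
      rcases h (Set.mem_insert_of_mem u hux) with rfl | hvx
      · exact (dist_le q).trans (Nat.le_succ _)
      · exact dist_le (Walk.cons hvx q)
  · have hvw : ¬ G.Reachable v w := by
      rcases eq_or_adj_of_insert_neighborSet_subset h with rfl | hvu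
      · exact hr
      · exact fun hvw => hr (hvu.symm.reachable.trans hvw)
    rw [dist_eq_zero_of_not_reachable hvw]
    exact Nat.zero_le _

lemma dist_eq_dist_of_trueTwin (h : trueTwinSetoid G u v) (hwu : w ≠ u) (hwv : w ≠ v) :
    G.dist u w = G.dist v w :=
  le_antisymm (dist_le_dist_of_insert_neighborSet_subset h.symm.le hwv)
    (dist_le_dist_of_insert_neighborSet_subset h.le hwu)

end SimpleGraph

section

variable {α β : Type*} {G : SimpleGraph α}

lemma isLocalMetricGenerator_univ : IsLocalMetricGenerator G Set.univ :=
  fun u v huv => ⟨u, trivial, by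
    rw [dist_self]; exact (huv.symm.reachable.pos_dist_of_ne huv.ne').ne⟩

lemma IsLocalMetricGenerator.injective_quotientMk_compl {S : Set α}
    (hS : IsLocalMetricGenerator G S) :
    Function.Injective (fun x : ↥Sᶜ => Quotient.mk (trueTwinSetoid G) x.1) := by
  rintro ⟨u, hu⟩ ⟨v, hv⟩ huv
  have htwin : trueTwinSetoid G u v := Quotient.exact huv
  rcases eq_or_adj_of_insert_neighborSet_subset htwin.le with rfl | hadj
  · rfl
  obtain ⟨s, hs, hd⟩ := hS u v hadj.symm
  exact absurd (dist_eq_dist_of_trueTwin htwin (fun h => hu (h ▸ hs)) (fun h => hv (h ▸ hs))) hd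

lemma IsLocalMetricGenerator.card_sub_card_le [Fintype α] {S : Finset α}
    (hS : IsLocalMetricGenerator G ↑S) :
    Fintype.card α - S.card ≤ Nat.card (Quotient (trueTwinSetoid G)) := by
  classical
  rw [← Finset.card_compl, ← Nat.card_eq_finsetCard]
  have hinj := hS.injective_quotientMk_compl
  rw [← Finset.coe_compl] at hinj
  exact Nat.card_le_card_of_injective _ hinj

lemma card_sub_card_trueTwin_le_localMetricDim [Fintype α] (G : SimpleGraph α) :
    Fintype.card α - Nat.card (Quotient (trueTwinSetoid G)) ≤ localMetricDim G := by
  classical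
  refine le_csInf ⟨_, Finset.univ, rfl, by simpa using isLocalMetricGenerator_univ⟩ ?_
  rintro n ⟨S, rfl, hS⟩
  have := hS.card_sub_card_le
  omega

lemma insert_neighborSet_strongProd (G : SimpleGraph α) (H : SimpleGraph β) (x : α × β) :
    insert x ((strongProd G H).neighborSet x) =
      insert x.1 (G.neighborSet x.1) ×ˢ insert x.2 (H.neighborSet x.2) := by
  ext y
  simp only [Set.mem_insert_iff, mem_neighborSet, Set.mem_prod, strongProd, Prod.ext_iff,
    eq_comm (a := y.1), eq_comm (a := y.2)]
  tauto

lemma trueTwinSetoid_strongProd (G : SimpleGraph α) (H : SimpleGraph β) :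
    trueTwinSetoid (strongProd G H) = (trueTwinSetoid G).prod (trueTwinSetoid H) := by
  refine Setoid.ext fun x y => ?_
  change insert _ _ = insert _ _ ↔ _
  rw [insert_neighborSet_strongProd, insert_neighborSet_strongProd,
    Set.prod_eq_prod_iff_of_nonempty ⟨x, Set.mem_insert _ _, Set.mem_insert _ _⟩]
  rfl

lemma natCard_quotient_trueTwinSetoid_strongProd (G : SimpleGraph α) (H : SimpleGraph β) :
    Nat.card (Quotient (trueTwinSetoid (strongProd G H))) =
      Nat.card (Quotient (trueTwinSetoid G)) * Nat.card (Quotient (trueTwinSetoid H)) := by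
  rw [trueTwinSetoid_strongProd, ← Nat.card_prod,
    Nat.card_congr (Setoid.prodQuotientEquiv (trueTwinSetoid G) (trueTwinSetoid H))]

end

theorem stmt5_general {α β : Type*} [Fintype α] [Fintype β]
    (G : SimpleGraph α) (H : SimpleGraph β)
    (t1 t2 : ℕ)
    (ht1 : Nat.card (Quotient (trueTwinSetoid G)) = t1)
    (ht2 : Nat.card (Quotient (trueTwinSetoid H)) = t2) :
    Fintype.card α * Fintype.card β - t1 * t2 ≤ localMetricDim (strongProd G H) := by
  rw [← ht1, ← ht2, ← natCard_quotient_trueTwinSetoid_strongProd, ← Fintype.card_prod]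
  exact card_sub_card_trueTwin_le_localMetricDim _

/-- `dim_l(G ⊠ H) ≥ n₁n₂ − t₁t₂`. -/
theorem stmt5 {α β : Type*} [Fintype α] [Fintype β]
    (G : SimpleGraph α) (H : SimpleGraph β)
    (hG : G.Connected) (hH : H.Connected)
    (hn1 : 2 ≤ Fintype.card α) (hn2 : 2 ≤ Fintype.card β)
    (t1 t2 : ℕ)
    (ht1 : Nat.card (Quotient (trueTwinSetoid G)) = t1)
    (ht2 : Nat.card (Quotient (trueTwinSetoid H)) = t2) :
    Fintype.card α * Fintype.card β - t1 * t2 ≤ localMetricDim (strongProd G H) :=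
  stmt5_general G H t1 t2 ht1 ht2
end

section
/- For any connected graph G with at least two vertices and any integer t ≥ 3, one has dim_l(C_t ⊠ G) ≥ ⌈t/D(G)⌉, where D(G) is the diameter of G and C_t is the cycle on t vertices. -/
open SimpleGraph

/-!
Write `D` for the diameter of `G`. Distances in `H ⊠ G` are maxima of the distances in the
factors, so an element `s` of a local metric generator whose first coordinate is at distance
`≥ D` from `i` sees all of the column `{i} × V(G)` at the same distance and resolves no edge
inside it. Every column therefore contains an element of the generator or has two elements
within distance `< D`: a single nearby `s` outside the column cannot resolve the edge from
`(i, s.2)` to `(i, w)`, `w` a neighbour of `s.2`. Giving weight `1` to each nearby element and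
an extra `1` to each element inside the column, every column gets weight `≥ 2`, while an
element `s` contributes at most the size of the ball of radius `D - 1` around `s.1`, plus one.
On the cycle `C_t` that ball has at most `2D - 1` vertices, so `2t ≤ 2D · |S|`.
-/

open Finset

namespace SimpleGraph

variable {α β : Type*} {G : SimpleGraph α} {H : SimpleGraph β}

theorem boxProd_le_strongProd : G.boxProd H ≤ strongProd G H :=
  fun _ _ h => h.elim (fun h => Or.inr (Or.inl h.symm)) (fun h => Or.inl h.symm)

theorem strongProd_adj_fst {x y : α × β} (h : (strongProd G H).Adj x y) :
    x.1 = y.1 ∨ G.Adj x.1 y.1 := by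
  rcases h with ⟨h, -⟩ | ⟨-, h⟩ | ⟨h, -⟩ <;> tauto

theorem strongProd_adj_snd {x y : α × β} (h : (strongProd G H).Adj x y) :
    x.2 = y.2 ∨ H.Adj x.2 y.2 := by
  rcases h with ⟨-, h⟩ | ⟨h, -⟩ | ⟨-, h⟩ <;> tauto

theorem dist_le_one_of_eq_or_adj {u v : α} (h : u = v ∨ G.Adj u v) : G.dist u v ≤ 1 := by
  rcases h with rfl | h
  · simp
  · exact (dist_eq_one_iff_adj.2 h).le

theorem Connected.dist_apply_le_length (hH : H.Connected) {f : α → β}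
    (hf : ∀ ⦃u v⦄, G.Adj u v → H.dist (f u) (f v) ≤ 1) {u v : α} (p : G.Walk u v) :
    H.dist (f u) (f v) ≤ p.length := by
  induction p with
  | nil => simp
  | @cons u w v h p ih =>
    calc H.dist (f u) (f v) ≤ H.dist (f u) (f w) + H.dist (f w) (f v) := hH.dist_triangle
      _ ≤ p.length + 1 := by linarith [hf h]
      _ = (p.cons h).length := (Walk.length_cons h p).symm

theorem exists_walk_strongProd_length_eq_max :
    ∀ {a c : α} {b d : β} (p : G.Walk a c) (q : H.Walk b d),
      ∃ w : (strongProd G H).Walk (a, b) (c, d), w.length = max p.length q.length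
  | a, _, _, _, .nil, q =>
    ⟨(Walk.boxProdRight G a q).mapLe boxProd_le_strongProd,
      (Walk.length_mapLe _ _).trans ((Walk.length_map _ _).trans (zero_max _).symm)⟩
  | _, _, b, _, .cons h p, .nil =>
    ⟨(Walk.boxProdLeft H b (.cons h p)).mapLe boxProd_le_strongProd,
      (Walk.length_mapLe _ _).trans ((Walk.length_map _ _).trans (max_zero _).symm)⟩
  | _, _, _, _, .cons hG p, .cons hH q => by
    obtain ⟨w, hw⟩ := exists_walk_strongProd_length_eq_max p q
    exact ⟨.cons (Or.inr (Or.inr ⟨hG, hH⟩)) w,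
      (congrArg (· + 1) hw).trans (Nat.succ_max_succ _ _).symm⟩

theorem dist_strongProd (hG : G.Connected) (hH : H.Connected) (x y : α × β) :
    (strongProd G H).dist x y = max (G.dist x.1 y.1) (H.dist x.2 y.2) := by
  obtain ⟨p, hp⟩ := hG.exists_walk_length_eq_dist x.1 y.1
  obtain ⟨q, hq⟩ := hH.exists_walk_length_eq_dist x.2 y.2
  obtain ⟨w, hw⟩ := exists_walk_strongProd_length_eq_max p q
  refine le_antisymm (hp ▸ hq ▸ hw ▸ dist_le w) ?_
  obtain ⟨w', hw'⟩ := w.reachable.exists_walk_length_eq_dist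
  rw [← hw']
  exact max_le
    (hG.dist_apply_le_length (fun _ _ h => dist_le_one_of_eq_or_adj (strongProd_adj_fst h)) w')
    (hH.dist_apply_le_length (fun _ _ h => dist_le_one_of_eq_or_adj (strongProd_adj_snd h)) w')

end SimpleGraph

section Diameter

variable {α : Type*} [Finite α] (G : SimpleGraph α)

theorem dist_le_eccentricity (u v : α) : G.dist u v ≤ eccentricity G u :=
  le_csSup (Set.finite_range _).bddAbove ⟨v, rfl⟩

theorem eccentricity_le_graphDiam (u : α) : eccentricity G u ≤ graphDiam G :=
  le_csSup (Set.finite_range _).bddAbove ⟨u, rfl⟩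

theorem dist_le_graphDiam (u v : α) : G.dist u v ≤ graphDiam G :=
  (dist_le_eccentricity G u v).trans (eccentricity_le_graphDiam G u)

theorem one_le_graphDiam [Nontrivial α] (hG : G.Connected) : 1 ≤ graphDiam G := by
  obtain ⟨u, v, huv⟩ := exists_pair_ne α
  exact (hG.pos_dist_of_ne huv).trans_le (dist_le_graphDiam G u v)

end Diameter

theorem exists_isLocalMetricGenerator_card_eq_localMetricDim {V : Type*} [Fintype V]
    (G : SimpleGraph V) : ∃ S : Finset V, #S = localMetricDim G ∧ IsLocalMetricGenerator G S :=
  Nat.sInf_mem (s := {n | ∃ S : Finset V, #S = n ∧ IsLocalMetricGenerator G S})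
    ⟨_, univ, rfl, fun u v h =>
      ⟨u, by simp, by simp [SimpleGraph.dist_eq_one_iff_adj.2 h.symm]⟩⟩

section Cycle

open Fin.CommRing

theorem exists_eq_add_intCast_of_walk_cycleGraph {n : ℕ} {x y : Fin (n + 2)}
    (p : (cycleGraph (n + 2)).Walk x y) : ∃ m : ℤ, |m| ≤ p.length ∧ x = y + m := by
  induction p with
  | nil => exact ⟨0, by simp⟩
  | cons h p ih =>
    obtain ⟨m, hm, rfl⟩ := ih
    rw [Walk.length_cons, Nat.cast_add_one]
    rcases cycleGraph_adj.1 h with h | h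
    · refine ⟨m + 1, (abs_add_le _ _).trans (by simpa using hm), ?_⟩
      push_cast
      linear_combination h
    · refine ⟨m - 1, (abs_sub _ _).trans (by simpa using hm), ?_⟩
      push_cast
      linear_combination -h

theorem card_filter_dist_cycleGraph_le (n R : ℕ) (a : Fin (n + 2)) :
    #{i | (cycleGraph (n + 2)).dist i a ≤ R} ≤ 2 * R + 1 := by
  calc #{i | (cycleGraph (n + 2)).dist i a ≤ R}
      ≤ #((Icc (-R : ℤ) R).image fun m : ℤ => a + m) := card_le_card fun i hi => ?_
    _ ≤ #(Icc (-R : ℤ) R) := card_image_le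
    _ = 2 * R + 1 := by rw [Int.card_Icc]; omega
  obtain ⟨p, hp⟩ := cycleGraph_connected.exists_walk_length_eq_dist i a
  obtain ⟨m, hm, rfl⟩ := exists_eq_add_intCast_of_walk_cycleGraph p
  simp only [mem_filter, mem_univ, true_and] at hi
  exact mem_image.2 ⟨m, mem_Icc.2 (abs_le.1 (hm.trans (by exact_mod_cast hp ▸ hi))), rfl⟩

end Cycle

section Counting

variable {α β : Type*} {G : SimpleGraph α} {H : SimpleGraph β}

theorem dist_strongProd_column_of_graphDiam_le [Finite α] (hG : G.Connected)
    (hH : H.Connected) {i : β} {s : β × α} (h : graphDiam G ≤ H.dist i s.1) (u : α) :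
    (strongProd H G).dist (i, u) s = H.dist i s.1 := by
  rw [dist_strongProd hH hG]
  exact max_eq_left ((dist_le_graphDiam G u s.2).trans h)

theorem dist_lt_graphDiam_of_dist_strongProd_ne [Finite α] (hG : G.Connected)
    (hH : H.Connected) {i : β} {u v : α} {s : β × α}
    (hne : (strongProd H G).dist (i, u) s ≠ (strongProd H G).dist (i, v) s) :
    H.dist i s.1 < graphDiam G := by
  by_contra! h
  rw [dist_strongProd_column_of_graphDiam_le hG hH h,
    dist_strongProd_column_of_graphDiam_le hG hH h] at hne
  exact hne rfl

theorem fst_eq_of_dist_strongProd_ne (hG : G.Connected) (hH : H.Connected) {i : β} {s : β × α}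
    {w : α} (hw : G.Adj s.2 w)
    (hne : (strongProd H G).dist (i, s.2) s ≠ (strongProd H G).dist (i, w) s) : s.1 = i := by
  by_contra h
  have hpos := hH.pos_dist_of_ne (Ne.symm h)
  rw [dist_strongProd hH hG, dist_strongProd hH hG, dist_self, dist_eq_one_iff_adj.2 hw.symm,
    max_eq_left hpos.le, max_eq_left hpos] at hne
  exact hne rfl

variable [DecidableEq β] {S : Finset (β × α)}

theorem two_le_card_near_add_card_column [Finite α] [Nontrivial α] (hG : G.Connected)
    (hH : H.Connected) (hS : IsLocalMetricGenerator (strongProd H G) S)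
    (i : β) : 2 ≤ #{s ∈ S | H.dist i s.1 < graphDiam G} + #{s ∈ S | s.1 = i} := by
  have hnear {u v : α} (huv : G.Adj u v) :
      ∃ s ∈ {s ∈ S | H.dist i s.1 < graphDiam G},
        (strongProd H G).dist (i, u) s ≠ (strongProd H G).dist (i, v) s := by
    obtain ⟨s, hs, hne⟩ := hS (i, u) (i, v) (Or.inl ⟨rfl, huv⟩)
    exact ⟨s, mem_filter.2 ⟨hs, dist_lt_graphDiam_of_dist_strongProd_ne hG hH hne⟩, hne⟩
  obtain ⟨u⟩ := hG.nonempty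
  obtain ⟨v, huv⟩ := hG.preconnected.exists_adj_of_nontrivial u
  obtain ⟨s₀, hs₀, -⟩ := hnear huv
  by_cases hcol : s₀.1 = i
  · have hs₀' : s₀ ∈ {s ∈ S | s.1 = i} := mem_filter.2 ⟨(mem_filter.1 hs₀).1, hcol⟩
    have := card_pos.2 ⟨s₀, hs₀⟩
    have := card_pos.2 ⟨s₀, hs₀'⟩
    omega
  · obtain ⟨w, hw⟩ := hG.preconnected.exists_adj_of_nontrivial s₀.2
    obtain ⟨s₁, hs₁, hne⟩ := hnear hw
    have : s₀ ≠ s₁ := by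
      rintro rfl
      exact hcol (fst_eq_of_dist_strongProd_ne hG hH hw hne)
    have := one_lt_card.2 ⟨s₀, hs₀, s₁, hs₁, this⟩
    omega

theorem two_mul_card_le_card_mul_of_isLocalMetricGenerator [Finite α] [Nontrivial α] [Fintype β]
    (hG : G.Connected) (hH : H.Connected) {B : ℕ}
    (hB : ∀ a : β, #{i | H.dist i a < graphDiam G} ≤ B)
    (hS : IsLocalMetricGenerator (strongProd H G) S) : 2 * Fintype.card β ≤ #S * (B + 1) :=
  calc 2 * Fintype.card β = ∑ _i : β, 2 := by simp [mul_comm]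
    _ ≤ ∑ i, (#{s ∈ S | H.dist i s.1 < graphDiam G} + #{s ∈ S | s.1 = i}) :=
      sum_le_sum fun i _ => two_le_card_near_add_card_column hG hH hS i
    _ = ∑ s ∈ S, #{i | H.dist i s.1 < graphDiam G} + #S := by
      rw [sum_add_distrib, card_eq_sum_card_fiberwise (f := Prod.fst) (t := univ) (by simp)]
      simp only [card_filter]
      rw [sum_comm]
    _ ≤ ∑ _s ∈ S, B + #S := by gcongr; exact hB _
    _ = #S * (B + 1) := by rw [sum_const, smul_eq_mul]; ring

end Counting

theorem le_card_mul_graphDiam_of_isLocalMetricGenerator {α : Type*} [Finite α] [Nontrivial α]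
    {G : SimpleGraph α} (hG : G.Connected) {n : ℕ} {S : Finset (Fin (n + 2) × α)}
    (hS : IsLocalMetricGenerator (strongProd (cycleGraph (n + 2)) G) S) :
    n + 2 ≤ #S * graphDiam G := by
  have hD := one_le_graphDiam G hG
  have hball (a : Fin (n + 2)) :
      #{i | (cycleGraph (n + 2)).dist i a < graphDiam G} ≤ 2 * graphDiam G - 1 := by
    have := card_filter_dist_cycleGraph_le n (graphDiam G - 1) a
    simp only [Nat.lt_iff_le_pred hD]
    omega
  have := two_mul_card_le_card_mul_of_isLocalMetricGenerator hG cycleGraph_connected hball hS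
  rw [Fintype.card_fin, Nat.sub_add_cancel (by omega)] at this
  linarith

/-- `dim_l(C_t ⊠ G) ≥ ⌈t/D(G)⌉`. -/
theorem stmt18 {α : Type*} [Fintype α] (G : SimpleGraph α) (hG : G.Connected)
    (hn : 2 ≤ Fintype.card α) (t : ℕ) (ht : 3 ≤ t) :
    ⌈(t : ℚ) / (graphDiam G : ℚ)⌉ ≤
      (localMetricDim (strongProd (SimpleGraph.cycleGraph t) G) : ℤ) := by
  obtain ⟨n, rfl⟩ : ∃ n, t = n + 2 := ⟨t - 2, by omega⟩
  have : Nontrivial α := Fintype.one_lt_card_iff_nontrivial.1 hn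
  obtain ⟨S, hcard, hS⟩ :=
    exists_isLocalMetricGenerator_card_eq_localMetricDim (strongProd (cycleGraph (n + 2)) G)
  have hD : (0 : ℚ) < graphDiam G := by exact_mod_cast one_le_graphDiam G hG
  rw [Int.ceil_le, Int.cast_natCast, ← hcard, div_le_iff₀ hD]
  exact_mod_cast le_card_mul_graphDiam_of_isLocalMetricGenerator hG hS
end
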